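/- At a KKT point of the Lagrangian L of the relaxed problem, if mode M1 is selected in slot i (d1(i)=1, hence d2(i)=d3(i)=d4(i)=0), then the selection function V1(i) = α0·O1(i)·R0 satisfies V1(i) ≥ Vj(i) for all j ∈ {2,3,4}, where V2(i)=(1−α0)O2(i)R0, V3(i)=O3(i)R0, V4(i)=0. In particular V1(i) − Vj(i) = N(μ1(i) + νj(i)) ≥ 0 using complementary slackness (μj(i)=0 for j≠1, ν1(i)=0) and nonnegativity of multipliers. -/
import Mathlib

/-- at a KKT point where mode M1 is selected in slot i (d1=1),
complementary slackness forces μ2=μ3=μ4=0 and ν1=0, and then the selection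
function V1 dominates V2, V3, V4, with V1 − Vj = N(μ1 + νj) ≥ 0. -/
theorem kkt_mode_selection
    (N R0 α0 β μ1 μ2 μ3 μ4 ν1 ν2 ν3 ν4 O1 O2 O3 : ℝ)
    (hN : 0 < N) (hR0 : 0 < R0)
    (hα0 : 0 ≤ α0)
    (hμ1 : 0 ≤ μ1) (hμ2 : 0 ≤ μ2) (hμ3 : 0 ≤ μ3) (hμ4 : 0 ≤ μ4)
    (hν1 : 0 ≤ ν1) (hν2 : 0 ≤ ν2) (hν3 : 0 ≤ ν3) (hν4 : 0 ≤ ν4)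
    -- stationarity: N[β + μj − νj] = Vj
    (hs1 : N * (β + μ1 - ν1) = α0 * O1 * R0)
    (hs2 : N * (β + μ2 - ν2) = (1 - α0) * O2 * R0)
    (hs3 : N * (β + μ3 - ν3) = O3 * R0)
    (hs4 : N * (β + μ4 - ν4) = 0)
    -- complementary slackness with d1(i) = 1, d2(i) = d3(i) = d4(i) = 0
    (hcs2 : μ2 = 0) (hcs3 : μ3 = 0) (hcs4 : μ4 = 0) (hcs1 : ν1 = 0) :
    (α0 * O1 * R0 - (1 - α0) * O2 * R0 = N * (μ1 + ν2) ∧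
     α0 * O1 * R0 - O3 * R0 = N * (μ1 + ν3) ∧
     α0 * O1 * R0 - 0 = N * (μ1 + ν4)) ∧
    ((1 - α0) * O2 * R0 ≤ α0 * O1 * R0 ∧
     O3 * R0 ≤ α0 * O1 * R0 ∧
     (0 : ℝ) ≤ α0 * O1 * R0) := by
  subst hcs1 hcs2 hcs3 hcs4
  have e2 : α0 * O1 * R0 - (1 - α0) * O2 * R0 = N * (μ1 + ν2) := by nlinarith [hs1, hs2]
  have e3 : α0 * O1 * R0 - O3 * R0 = N * (μ1 + ν3) := by nlinarith [hs1, hs3]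
  have e4 : α0 * O1 * R0 - 0 = N * (μ1 + ν4) := by nlinarith [hs1, hs4]
  refine ⟨⟨e2, e3, e4⟩, by nlinarith, by nlinarith, by nlinarith⟩
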